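/- Let $V$ have dimension $n$ and $T_1,\dots,T_n \in \mathrm{End}(V)$, extended to $\wedge^* V$ as derivations. Then $\mathrm{str}(T_1\cdots T_n)$ is invariant under any permutation of the factors: for every permutation $\sigma$ of $\{1,\dots,n\}$, $\mathrm{str}(T_{\sigma(1)}\cdots T_{\sigma(n)}) = \mathrm{str}(T_1\cdots T_n)$. -/

import Mathlib

/-- Supertrace on the exterior algebra: trace composed with the grade involution. -/
noncomputable def supertrace (V : Type*) [AddCommGroup V] [Module ℝ V]
    (S : Module.End ℝ (ExteriorAlgebra ℝ V)) : ℝ :=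
  LinearMap.trace ℝ (ExteriorAlgebra ℝ V)
    ((CliffordAlgebra.involute (Q := (0 : QuadraticForm ℝ V))).toLinearMap ∘ₗ S)

/-!
Write `L u` for left multiplication by `ι u` and `C d` for contraction with `d`. A derivation of
`⋀ V` extending `T` equals `∑ᵢ L (T eᵢ) * C eᵢ*`, so a product of `k` derivations is a linear
combination of products of `k` operators `L u * C d`. If `k < dim V`, these `k` functionals `d`
have a common zero `v ≠ 0`, and `L v` commutes with every `L u * C d`, hence with their product
`W`. For `d` with `d v ≠ 0`, the relation `C d * L v + L v * C d = d v` gives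
`d v • W = L v * (C d * W) + (C d * W) * L v`, whose supertrace vanishes because `L v` is odd.
Swapping two adjacent factors of a product of `n = dim V` derivations changes it by a product of
`n - 1` derivations (one of them a commutator), so the supertrace is invariant under adjacent
transpositions, hence under all permutations.
-/

theorem Submodule.list_prod_mem_pow {R A : Type*} [CommSemiring R] [Semiring A] [Algebra R A]
    {M : Submodule R A} : ∀ {l : List A}, (∀ x ∈ l, x ∈ M) → l.prod ∈ M ^ l.length
  | [], _ => by
    rw [List.prod_nil, List.length_nil, pow_zero]
    exact Submodule.one_le.mp le_rfl
  | x :: l, hl => by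
    rw [List.prod_cons, List.length_cons, pow_succ']
    exact Submodule.mul_mem_mul (hl x List.mem_cons_self)
      (list_prod_mem_pow fun y hy => hl y (List.mem_cons_of_mem x hy))

theorem CliffordAlgebra.contractLeft_mul {R M : Type*} [CommRing R] [AddCommGroup M] [Module R M]
    {Q : QuadraticForm R M} (d : Module.Dual R M) (x y : CliffordAlgebra Q) :
    contractLeft d (x * y) = contractLeft d x * y + involute x * contractLeft d y := by
  induction x using CliffordAlgebra.left_induction with
  | algebraMap r =>
    simp [contractLeft_algebraMap_mul, contractLeft_algebraMap]
  | add a b ha hb => simp only [add_mul, map_add, ha, hb]; abel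
  | ι_mul x m hx =>
    rw [mul_assoc, contractLeft_ι_mul, hx, contractLeft_ι_mul, map_mul, involute_ι]
    simp only [sub_mul, smul_mul_assoc, mul_add, neg_mul, mul_assoc]
    abel

namespace ExteriorAlgebra

variable {R M : Type*} [CommRing R] [AddCommGroup M] [Module R M]

theorem ι_mul_involute (v : M) (x : ExteriorAlgebra R M) :
    ι R v * CliffordAlgebra.involute x = x * ι R v := by
  induction x using ExteriorAlgebra.induction with
  | algebraMap r => simp [Algebra.commutes]
  | ι w =>
    rw [CliffordAlgebra.involute_ι, mul_neg, neg_eq_iff_add_eq_zero]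
    exact ι_add_mul_swap v w
  | mul a b ha hb => rw [map_mul, ← mul_assoc, ha, mul_assoc, hb, mul_assoc]
  | add a b ha hb => simp [mul_add, add_mul, ha, hb]

variable (R) in
noncomputable def creation (v : M) : Module.End R (ExteriorAlgebra R M) :=
  LinearMap.mulLeft R (ι R v)

noncomputable def annihilation (d : Module.Dual R M) : Module.End R (ExteriorAlgebra R M) :=
  CliffordAlgebra.contractLeft d

variable (R M) in
noncomputable def gradeInvolution : Module.End R (ExteriorAlgebra R M) :=
  CliffordAlgebra.involute.toLinearMap

theorem creation_apply (v : M) (x : ExteriorAlgebra R M) : creation R v x = ι R v * x := rfl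

theorem annihilation_apply (d : Module.Dual R M) (x : ExteriorAlgebra R M) :
    annihilation d x = CliffordAlgebra.contractLeft d x := rfl

theorem annihilation_mul_creation_add_creation_mul_annihilation (d : Module.Dual R M) (v : M) :
    annihilation d * creation R v + creation R v * annihilation d = d v • 1 := by
  refine LinearMap.ext fun x => ?_
  simp only [LinearMap.add_apply, Module.End.mul_apply, creation_apply, annihilation_apply,
    CliffordAlgebra.contractLeft_ι_mul, LinearMap.smul_apply, Module.End.one_apply]
  abel

theorem gradeInvolution_mul_creation (v : M) :
    gradeInvolution R M * creation R v = -(creation R v * gradeInvolution R M) := by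
  refine LinearMap.ext fun x => ?_
  simp [gradeInvolution, creation_apply]

theorem commute_creation_creation_mul_annihilation {v : M} {d : Module.Dual R M} (hdv : d v = 0)
    (u : M) : Commute (creation R v) (creation R u * annihilation d) := by
  refine LinearMap.ext fun x => ?_
  simp only [Module.End.mul_apply, creation_apply, annihilation_apply,
    CliffordAlgebra.contractLeft_ι_mul, hdv, zero_smul, zero_sub, mul_neg, ← mul_assoc,
    eq_neg_of_add_eq_zero_left (ι_add_mul_swap v u), neg_mul]

def IsDerivationExtending (T : Module.End R M) (D : Module.End R (ExteriorAlgebra R M)) : Prop :=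
  (∀ x y, D (x * y) = D x * y + x * D y) ∧ ∀ v, D (ι R v) = ι R (T v)

namespace IsDerivationExtending

variable {T T' : Module.End R M} {D D' : Module.End R (ExteriorAlgebra R M)}

theorem map_one (hD : IsDerivationExtending T D) : D 1 = 0 := by
  simpa using hD.1 1 1

theorem lie (hD : IsDerivationExtending T D) (hD' : IsDerivationExtending T' D') :
    IsDerivationExtending ⁅T, T'⁆ ⁅D, D'⁆ := by
  refine ⟨fun x y => ?_, fun v => ?_⟩
  · simp only [Ring.lie_def, LinearMap.sub_apply, Module.End.mul_apply, hD.1, hD'.1, map_add,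
      sub_mul, mul_sub]
    abel
  · simp only [Ring.lie_def, LinearMap.sub_apply, Module.End.mul_apply, hD.2, hD'.2, map_sub]

theorem unique (hD : IsDerivationExtending T D) (hD' : IsDerivationExtending T D') : D = D' := by
  refine LinearMap.ext fun x => ?_
  induction x using ExteriorAlgebra.induction with
  | algebraMap r => rw [Algebra.algebraMap_eq_smul_one, map_smul, map_smul, hD.map_one, hD'.map_one]
  | ι v => rw [hD.2, hD'.2]
  | mul a b ha hb => rw [hD.1, hD'.1, ha, hb]
  | add a b ha hb => rw [map_add, map_add, ha, hb]

end IsDerivationExtending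

theorem isDerivationExtending_sum_creation_mul_annihilation {ι : Type*} [Fintype ι]
    (b : Module.Basis ι R M) (T : Module.End R M) :
    IsDerivationExtending T (∑ i, creation R (T (b i)) * annihilation (b.coord i)) := by
  refine ⟨fun x y => ?_, fun v => ?_⟩
  · simp only [LinearMap.sum_apply, Module.End.mul_apply, creation_apply, annihilation_apply,
      CliffordAlgebra.contractLeft_mul, mul_add, ← mul_assoc, ι_mul_involute,
      Finset.sum_add_distrib, Finset.sum_mul, Finset.mul_sum]
  · simp only [LinearMap.sum_apply, Module.End.mul_apply, creation_apply, annihilation_apply,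
      CliffordAlgebra.contractLeft_ι, Module.Basis.coord_apply, ← Algebra.commutes,
      ← Algebra.smul_def, ← map_smul, ← map_sum, b.sum_repr]

variable (R M) in
noncomputable def creationAnnihilationSpan : Submodule R (Module.End R (ExteriorAlgebra R M)) :=
  Submodule.span R (Set.range fun p : M × Module.Dual R M => creation R p.1 * annihilation p.2)

theorem IsDerivationExtending.mem_creationAnnihilationSpan [Module.Free R M] [Module.Finite R M]
    {T : Module.End R M} {D : Module.End R (ExteriorAlgebra R M)}
    (hD : IsDerivationExtending T D) : D ∈ creationAnnihilationSpan R M := by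
  rw [hD.unique (isDerivationExtending_sum_creation_mul_annihilation
    (Module.Free.chooseBasis R M) T)]
  exact Submodule.sum_mem _ fun i _ => Submodule.subset_span ⟨(_, _), rfl⟩

end ExteriorAlgebra

section Supertrace

open ExteriorAlgebra

variable {V : Type*} [AddCommGroup V] [Module ℝ V]

variable (V) in
noncomputable def supertraceLinear : Module.End ℝ (ExteriorAlgebra ℝ V) →ₗ[ℝ] ℝ :=
  LinearMap.trace ℝ _ ∘ₗ LinearMap.mulLeft ℝ (gradeInvolution ℝ V)

theorem supertraceLinear_apply (S : Module.End ℝ (ExteriorAlgebra ℝ V)) :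
    supertraceLinear V S = supertrace V S := rfl

theorem supertrace_mul_add_supertrace_mul_swap {A : Module.End ℝ (ExteriorAlgebra ℝ V)}
    (hA : gradeInvolution ℝ V * A = -(A * gradeInvolution ℝ V))
    (B : Module.End ℝ (ExteriorAlgebra ℝ V)) :
    supertrace V (A * B) + supertrace V (B * A) = 0 := by
  change LinearMap.trace ℝ _ (gradeInvolution ℝ V * (A * B)) +
    LinearMap.trace ℝ _ (gradeInvolution ℝ V * (B * A)) = 0
  rw [← mul_assoc, hA, ← mul_assoc, LinearMap.trace_mul_comm _ (gradeInvolution ℝ V * B)]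
  simp only [Module.End.mul_eq_comp, LinearMap.neg_comp, LinearMap.comp_assoc, map_neg,
    neg_add_cancel]

theorem supertrace_eq_zero_of_commute_creation {v : V} (hv : v ≠ 0)
    {W : Module.End ℝ (ExteriorAlgebra ℝ V)} (hW : Commute (creation ℝ v) W) :
    supertrace V W = 0 := by
  obtain ⟨d, hd⟩ : ∃ d : Module.Dual ℝ V, d v ≠ 0 := by
    by_contra! h
    exact hv ((Module.forall_dual_apply_eq_zero_iff ℝ v).mp h)
  have hsplit : creation ℝ v * (annihilation d * W) + annihilation d * W * creation ℝ v
      = d v • W := by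
    rw [mul_assoc, ← hW.eq, ← mul_assoc, ← mul_assoc, ← add_mul, add_comm,
      annihilation_mul_creation_add_creation_mul_annihilation, smul_one_mul]
  have h := supertrace_mul_add_supertrace_mul_swap (gradeInvolution_mul_creation v)
    (annihilation d * W)
  rw [← supertraceLinear_apply, ← supertraceLinear_apply, ← map_add, hsplit, map_smul,
    smul_eq_zero] at h
  exact h.resolve_left hd

variable [FiniteDimensional ℝ V]

theorem supertrace_prod_creation_mul_annihilation_eq_zero {k : ℕ}
    (hk : k < Module.finrank ℝ V) (g : Fin k → V × Module.Dual ℝ V) :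
    supertrace V (List.ofFn fun i => creation ℝ (g i).1 * annihilation (g i).2).prod = 0 := by
  obtain ⟨v, hv, hv0⟩ := (Submodule.ne_bot_iff _).mp
    (LinearMap.ker_ne_bot_of_finrank_lt (f := LinearMap.pi fun i => (g i).2)
      (by rwa [Module.finrank_fin_fun]))
  refine supertrace_eq_zero_of_commute_creation hv0 (Commute.list_prod_right _ _ fun X hX => ?_)
  obtain ⟨i, rfl⟩ := List.mem_ofFn.mp hX
  exact commute_creation_creation_mul_annihilation (congrFun hv i) _

theorem supertrace_eq_zero_of_mem_creationAnnihilationSpan_pow {k : ℕ}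
    (hk : k < Module.finrank ℝ V) {W : Module.End ℝ (ExteriorAlgebra ℝ V)}
    (hW : W ∈ creationAnnihilationSpan ℝ V ^ k) : supertrace V W = 0 := by
  rw [creationAnnihilationSpan, Submodule.span_pow] at hW
  refine (Submodule.span_le (p := LinearMap.ker (supertraceLinear V))).mpr (fun X hX => ?_) hW
  obtain ⟨f, rfl⟩ := Set.mem_pow.mp hX
  choose g hg using fun i => (f i).2
  simpa only [← hg, SetLike.mem_coe, LinearMap.mem_ker, supertraceLinear_apply] using
    supertrace_prod_creation_mul_annihilation_eq_zero hk g

theorem supertrace_prod_eq_zero_of_length_lt {l : List (Module.End ℝ (ExteriorAlgebra ℝ V))}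
    (hl : ∀ D ∈ l, ∃ T, IsDerivationExtending T D) (hlen : l.length < Module.finrank ℝ V) :
    supertrace V l.prod = 0 :=
  supertrace_eq_zero_of_mem_creationAnnihilationSpan_pow hlen <|
    Submodule.list_prod_mem_pow fun D hD =>
      let ⟨_, hT⟩ := hl D hD
      hT.mem_creationAnnihilationSpan

theorem supertrace_prod_append_swap {p t : List (Module.End ℝ (ExteriorAlgebra ℝ V))}
    {x y : Module.End ℝ (ExteriorAlgebra ℝ V)}
    (hl : ∀ D ∈ p ++ x :: y :: t, ∃ T, IsDerivationExtending T D)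
    (hlen : (p ++ x :: y :: t).length = Module.finrank ℝ V) :
    supertrace V (p ++ x :: y :: t).prod = supertrace V (p ++ y :: x :: t).prod := by
  have hdiff : (p ++ x :: y :: t).prod - (p ++ y :: x :: t).prod = (p ++ ⁅x, y⁆ :: t).prod := by
    simp only [List.prod_append, List.prod_cons, Ring.lie_def, mul_sub, sub_mul, mul_assoc]
  have hvanish : supertrace V (p ++ ⁅x, y⁆ :: t).prod = 0 := by
    refine supertrace_prod_eq_zero_of_length_lt (fun D hD => ?_) (by simp at hlen ⊢; omega)
    simp only [List.mem_append, List.mem_cons] at hD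
    rcases hD with hD | rfl | hD
    · exact hl D (by simp [hD])
    · obtain ⟨Tx, hx⟩ := hl x (by simp)
      obtain ⟨Ty, hy⟩ := hl y (by simp)
      exact ⟨_, hx.lie hy⟩
    · exact hl D (by simp [hD])
  rw [← sub_eq_zero, ← supertraceLinear_apply, ← supertraceLinear_apply, ← map_sub, hdiff,
    supertraceLinear_apply, hvanish]

theorem supertrace_prod_append_perm {l₁ l₂ : List (Module.End ℝ (ExteriorAlgebra ℝ V))}
    (h : l₁.Perm l₂) (p : List (Module.End ℝ (ExteriorAlgebra ℝ V)))
    (hl : ∀ D ∈ p ++ l₁, ∃ T, IsDerivationExtending T D)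
    (hlen : (p ++ l₁).length = Module.finrank ℝ V) :
    supertrace V (p ++ l₁).prod = supertrace V (p ++ l₂).prod := by
  induction h generalizing p with
  | nil => rfl
  | cons x _ ih => simpa using ih (p ++ [x]) (by simpa using hl) (by simpa using hlen)
  | swap x y t => exact supertrace_prod_append_swap hl hlen
  | trans h₁₂ _ ih₁₂ ih₂₃ =>
    refine (ih₁₂ p hl hlen).trans (ih₂₃ p (fun D hD => hl D ?_) ?_)
    · simpa [h₁₂.mem_iff] using hD
    · simpa [h₁₂.length_eq] using hlen

end Supertrace

/-- If `dim V = n` and `T₁, …, T_n ∈ End(V)` are extended to the exterior algebra as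
derivations `D₁, …, D_n`, then the supertrace of the composition `D₁ ⋯ D_n` is invariant
under any permutation of the factors. -/
theorem supertrace_perm_invariant
    (V : Type*) [AddCommGroup V] [Module ℝ V] [FiniteDimensional ℝ V]
    (n : ℕ) (hdim : Module.finrank ℝ V = n)
    (T : Fin n → Module.End ℝ V)
    (D : Fin n → Module.End ℝ (ExteriorAlgebra ℝ V))
    (hder : ∀ i (x y : ExteriorAlgebra ℝ V), D i (x * y) = D i x * y + x * D i y)
    (hext : ∀ i (v : V), D i (ExteriorAlgebra.ι ℝ v) = ExteriorAlgebra.ι ℝ (T i v))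
    (σ : Equiv.Perm (Fin n)) :
    supertrace V ((List.ofFn fun i => D (σ i)).prod) =
      supertrace V ((List.ofFn D).prod) := by
  have hl : ∀ X ∈ [] ++ List.ofFn fun i => D (σ i),
      ∃ T, ExteriorAlgebra.IsDerivationExtending T X := by
    simp only [List.nil_append, List.mem_ofFn]
    rintro _ ⟨i, rfl⟩
    exact ⟨T (σ i), hder (σ i), hext (σ i)⟩
  simpa [Function.comp_def] using
    supertrace_prod_append_perm (σ.ofFn_comp_perm D) [] hl (by simp [hdim])
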